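/- arXiv:2501.01976 — 4 statements merged into one kernel-verified Lean document; each statement's English description precedes it below -/
import Mathlib

section
/- Let 0 < α < 1, γ > 0, and w(τ) = (α/γ)·(1+τ/γ)^{-(1+α)}. Then lim_{s→0⁺} (1 − ∫₀^∞ e^{−sτ} w(τ) dτ) / s^α = Γ(1−α) · γ^α; that is, the Laplace transform of w satisfies (ℒw)(s) = 1 − Γ(1−α)(γs)^α + o(s^α) as s → 0⁺. -/
/-!
The survival function `S(τ) = (1 + τ/γ)^(-α)` satisfies `S(0) = 1` and `S' = -w`, so integration
by parts gives `1 - (ℒw)(s) = s · (ℒS)(s)`. The substitution `u = sτ` turns `s · (ℒS)(s) / s^α`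
into `∫ e^(-u) (s + u/γ)^(-α) du`, which by dominated convergence tends to
`∫ e^(-u) (u/γ)^(-α) du = γ^α Γ(1 - α)` as `s → 0⁺`; the dominating function is integrable
because `α < 1`.
-/

open MeasureTheory Real Set Filter Topology

lemma integral_Ioi_exp_neg_mul_mul_deriv {S S' : ℝ → ℝ} {s : ℝ}
    (hS : ∀ τ ∈ Ici (0 : ℝ), HasDerivAt S (S' τ) τ)
    (hSint : IntegrableOn (fun τ => exp (-(s * τ)) * S τ) (Ioi 0))
    (hS'int : IntegrableOn (fun τ => exp (-(s * τ)) * S' τ) (Ioi 0))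
    (hlim : Tendsto (fun τ => exp (-(s * τ)) * S τ) atTop (𝓝 0)) :
    ∫ τ in Ioi (0 : ℝ), exp (-(s * τ)) * S' τ
      = s * (∫ τ in Ioi (0 : ℝ), exp (-(s * τ)) * S τ) - S 0 := by
  have hexp (τ : ℝ) : HasDerivAt (fun τ => exp (-(s * τ))) (-s * exp (-(s * τ))) τ := by
    simpa [mul_comm] using ((hasDerivAt_id τ).const_mul s).neg.exp
  have hzero : Tendsto ((fun τ => exp (-(s * τ))) * S) (𝓝[>] 0) (𝓝 (S 0)) := by
    have := ((hexp 0).continuousAt.mul (hS 0 (mem_Ici.mpr le_rfl)).continuousAt).tendsto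
    simpa using this.mono_left nhdsWithin_le_nhds
  have hS'int' : IntegrableOn ((fun τ => -s * exp (-(s * τ))) * S) (Ioi 0) := by
    simpa only [IntegrableOn, Pi.mul_def, mul_assoc] using hSint.const_mul (-s)
  have hparts := integral_Ioi_mul_deriv_eq_deriv_mul (fun τ _ => hexp τ)
    (fun τ hτ => hS τ (Ioi_subset_Ici_self hτ)) hS'int hS'int' hzero hlim
  simp only [mul_assoc, integral_const_mul] at hparts
  linarith

lemma rpow_neg_one_add_div_mem_Icc {γ β τ : ℝ} (hγ : 0 ≤ γ) (hβ : 0 ≤ β) (hτ : 0 ≤ τ) :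
    (1 + τ / γ) ^ (-β) ∈ Icc (0 : ℝ) 1 := by
  have h1 : 1 ≤ 1 + τ / γ := le_add_of_nonneg_right (div_nonneg hτ hγ)
  exact ⟨rpow_nonneg (by linarith) _, rpow_le_one_of_one_le_of_nonpos h1 (neg_nonpos.mpr hβ)⟩

lemma integrableOn_exp_neg_mul_mul_rpow_neg_one_add_div {s γ β : ℝ} (hs : 0 < s) (hγ : 0 ≤ γ)
    (hβ : 0 ≤ β) :
    IntegrableOn (fun τ => exp (-(s * τ)) * (1 + τ / γ) ^ (-β)) (Ioi 0) := by
  have hcont : ContinuousOn (fun τ => exp (-(s * τ)) * (1 + τ / γ) ^ (-β)) (Ioi 0) := by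
    refine ContinuousOn.mul (by fun_prop) (ContinuousOn.rpow_const (by fun_prop) fun τ hτ => ?_)
    exact Or.inl (by have := div_nonneg (le_of_lt hτ) hγ; positivity)
  refine (exp_neg_integrableOn_Ioi 0 hs).mono' (hcont.aestronglyMeasurable measurableSet_Ioi) ?_
  filter_upwards [ae_restrict_mem measurableSet_Ioi] with τ hτ
  obtain ⟨h0, h1⟩ := rpow_neg_one_add_div_mem_Icc hγ hβ (le_of_lt hτ)
  rw [norm_mul, norm_of_nonneg (exp_pos _).le, norm_of_nonneg h0, neg_mul]
  exact mul_le_of_le_one_right (exp_pos _).le h1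

lemma hasDerivAt_rpow_neg_one_add_div {α γ τ : ℝ} (hτ : 0 < 1 + τ / γ) :
    HasDerivAt (fun τ => (1 + τ / γ) ^ (-α)) (-(α / γ * (1 + τ / γ) ^ (-(1 + α)))) τ := by
  have h := (((hasDerivAt_id τ).div_const γ).const_add 1).rpow_const (p := -α) (Or.inl hτ.ne')
  rw [show -α - 1 = -(1 + α) by ring] at h
  simp only [id] at h
  convert h using 1
  ring

lemma tendsto_exp_neg_mul_mul_rpow_neg_one_add_div {s γ β : ℝ} (hs : 0 < s) (hγ : 0 ≤ γ)
    (hβ : 0 ≤ β) :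
    Tendsto (fun τ => exp (-(s * τ)) * (1 + τ / γ) ^ (-β)) atTop (𝓝 0) := by
  have hexp : Tendsto (fun τ => exp (-(s * τ))) atTop (𝓝 0) :=
    tendsto_exp_neg_atTop_nhds_zero.comp (tendsto_id.const_mul_atTop hs)
  refine hexp.zero_mul_isBoundedUnder_le (isBoundedUnder_of_eventually_le (a := 1) ?_)
  filter_upwards [eventually_ge_atTop (0 : ℝ)] with τ hτ
  obtain ⟨h0, h1⟩ := rpow_neg_one_add_div_mem_Icc hγ hβ hτ
  simpa [abs_of_nonneg h0] using h1

lemma one_sub_integral_exp_neg_mul_mul_rpow_neg_one_add_div {α γ s : ℝ} (hα : 0 ≤ α)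
    (hγ : 0 < γ) (hs : 0 < s) :
    1 - ∫ τ in Ioi (0 : ℝ), exp (-s * τ) * ((α / γ) * (1 + τ / γ) ^ (-(1 + α)))
      = s * ∫ τ in Ioi (0 : ℝ), exp (-(s * τ)) * (1 + τ / γ) ^ (-α) := by
  have hderiv : ∀ τ ∈ Ici (0 : ℝ), HasDerivAt (fun τ => (1 + τ / γ) ^ (-α))
      (-(α / γ * (1 + τ / γ) ^ (-(1 + α)))) τ := fun τ hτ =>
    hasDerivAt_rpow_neg_one_add_div (by have := div_nonneg (mem_Ici.mp hτ) hγ.le; positivity)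
  have hint' := (integrableOn_exp_neg_mul_mul_rpow_neg_one_add_div hs hγ.le
    (by linarith : 0 ≤ 1 + α)).const_mul (-(α / γ))
  have h := integral_Ioi_exp_neg_mul_mul_deriv hderiv
    (integrableOn_exp_neg_mul_mul_rpow_neg_one_add_div hs hγ.le hα)
    (by simpa only [IntegrableOn, mul_neg, neg_mul, mul_left_comm] using hint')
    (tendsto_exp_neg_mul_mul_rpow_neg_one_add_div hs hγ.le hα)
  simp only [mul_neg, integral_neg, zero_div, add_zero, one_rpow] at h
  simp only [neg_mul]
  linarith

lemma mul_integral_exp_neg_mul_mul_rpow_neg_one_add_div_div_rpow {α γ s : ℝ} (hγ : 0 ≤ γ)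
    (hs : 0 < s) :
    (s * ∫ τ in Ioi (0 : ℝ), exp (-(s * τ)) * (1 + τ / γ) ^ (-α)) / s ^ α
      = ∫ u in Ioi (0 : ℝ), exp (-u) * (s + u / γ) ^ (-α) := by
  have hpoint (u : ℝ) (hu : u ∈ Ioi (0 : ℝ)) :
      s ^ (-α) * (exp (-u) * (1 + u / (s * γ)) ^ (-α)) = exp (-u) * (s + u / γ) ^ (-α) := by
    have hbase : 0 ≤ 1 + u / (s * γ) := by
      have := div_nonneg (le_of_lt hu) (mul_nonneg hs.le hγ); linarith
    rw [mul_left_comm, ← mul_rpow hs.le hbase, mul_add, mul_one, ← mul_div_assoc,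
      mul_div_mul_left u γ hs.ne']
  have hsub := integral_comp_mul_left_Ioi (fun u => exp (-u) * (1 + u / (s * γ)) ^ (-α)) 0 hs
  simp only [mul_zero, smul_eq_mul, mul_div_mul_left _ γ hs.ne'] at hsub
  rw [hsub, ← mul_assoc, mul_inv_cancel₀ hs.ne', one_mul, div_eq_mul_inv, ← rpow_neg hs.le,
    mul_comm, ← integral_const_mul]
  exact setIntegral_congr_fun measurableSet_Ioi hpoint

lemma exp_neg_mul_div_rpow_neg_eq {α γ u : ℝ} (hγ : 0 < γ) (hu : 0 < u) :
    exp (-u) * (u / γ) ^ (-α) = γ ^ α * (exp (-u) * u ^ (1 - α - 1)) := by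
  rw [div_rpow hu.le hγ.le, show 1 - α - 1 = -α by ring, rpow_neg hγ.le]
  field_simp

lemma integrableOn_exp_neg_mul_div_rpow_neg {α γ : ℝ} (hα : α < 1) (hγ : 0 < γ) :
    IntegrableOn (fun u => exp (-u) * (u / γ) ^ (-α)) (Ioi 0) :=
  IntegrableOn.congr_fun ((GammaIntegral_convergent (by linarith : 0 < 1 - α)).const_mul (γ ^ α))
    (fun _ hu => (exp_neg_mul_div_rpow_neg_eq hγ hu).symm) measurableSet_Ioi

lemma integral_exp_neg_mul_div_rpow_neg {α γ : ℝ} (hα : α < 1) (hγ : 0 < γ) :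
    ∫ u in Ioi (0 : ℝ), exp (-u) * (u / γ) ^ (-α) = Gamma (1 - α) * γ ^ α := by
  rw [Gamma_eq_integral (by linarith), mul_comm, ← integral_const_mul]
  exact setIntegral_congr_fun measurableSet_Ioi fun _ hu => exp_neg_mul_div_rpow_neg_eq hγ hu

lemma tendsto_integral_exp_neg_mul_add_div_rpow_neg {α γ : ℝ} (hα0 : 0 ≤ α) (hα1 : α < 1)
    (hγ : 0 < γ) :
    Tendsto (fun s => ∫ u in Ioi (0 : ℝ), exp (-u) * (s + u / γ) ^ (-α)) (𝓝[>] 0)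
      (𝓝 (∫ u in Ioi (0 : ℝ), exp (-u) * (u / γ) ^ (-α))) := by
  refine tendsto_integral_filter_of_dominated_convergence _ ?_ ?_
    (integrableOn_exp_neg_mul_div_rpow_neg hα1 hγ) ?_
  · filter_upwards [self_mem_nhdsWithin] with s (hs : 0 < s)
    refine ContinuousOn.aestronglyMeasurable ?_ measurableSet_Ioi
    refine ContinuousOn.mul (by fun_prop) (ContinuousOn.rpow_const (by fun_prop) fun u hu => ?_)
    exact Or.inl (by have := div_pos (show 0 < u from hu) hγ; positivity)
  · filter_upwards [self_mem_nhdsWithin] with s (hs : 0 < s)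
    filter_upwards [ae_restrict_mem measurableSet_Ioi] with u (hu : 0 < u)
    have hu' : 0 < u / γ := div_pos hu hγ
    rw [norm_mul, norm_of_nonneg (exp_pos _).le, norm_of_nonneg (by positivity)]
    exact mul_le_mul_of_nonneg_left
      (rpow_le_rpow_of_nonpos hu' (by linarith) (neg_nonpos.mpr hα0)) (exp_pos _).le
  · filter_upwards [ae_restrict_mem measurableSet_Ioi] with u (hu : 0 < u)
    have hcont : ContinuousAt (fun s => exp (-u) * (s + u / γ) ^ (-α)) 0 :=
      continuousAt_const.mul ((continuousAt_id.add continuousAt_const).rpow_const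
        (Or.inl (by simpa using (div_pos hu hγ).ne')))
    simpa using hcont.tendsto.mono_left nhdsWithin_le_nhds

/-- For `w(τ) = (α/γ)(1+τ/γ)^{-(1+α)}`,
`(1 − (ℒw)(s)) / s^α → Γ(1−α)·γ^α` as `s → 0⁺`;
that is, `(ℒw)(s) = 1 − Γ(1−α)(γs)^α + o(s^α)`. -/
theorem stmt4 (α γ : ℝ) (hα0 : 0 < α) (hα1 : α < 1) (hγ : 0 < γ) :
    Tendsto
      (fun s : ℝ =>
        (1 - ∫ τ in Ioi (0:ℝ), Real.exp (-s * τ) * ((α / γ) * (1 + τ / γ) ^ (-(1 + α)))) / s ^ α)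
      (nhdsWithin 0 (Ioi 0)) (nhds (Real.Gamma (1 - α) * γ ^ α)) := by
  rw [← integral_exp_neg_mul_div_rpow_neg hα1 hγ]
  refine (tendsto_integral_exp_neg_mul_add_div_rpow_neg hα0.le hα1 hγ).congr' ?_
  filter_upwards [self_mem_nhdsWithin] with s (hs : 0 < s)
  rw [one_sub_integral_exp_neg_mul_mul_rpow_neg_one_add_div hα0.le hγ hs,
    mul_integral_exp_neg_mul_mul_rpow_neg_one_add_div_div_rpow hγ.le hs]
end

section
/- Let σ ∈ ℝ and let f : [0,∞) → ℝ be continuous, with t ↦ e^{−σt} f(t) Lebesgue integrable on (0,∞). Define G(ω) = ∫₀^∞ e^{−σt'} f(t') cos(ωt') dt' for ω ≥ 0 (this equals the real part of the Laplace transform of f at s = σ + iω), and suppose G is Lebesgue integrable on (0,∞). Then for every t > 0, f(t) = (2 e^{σt}/π) · ∫₀^∞ G(ω) cos(ωt) dω. -/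
/-! The function `u t = e^{-σt} f t` is extended evenly to `ℝ`. The Fourier transform of an even
real function is real, so it equals `2 G(2πξ)`, twice the cosine transform; in particular it is
even and integrable. Fourier inversion at `t` then expresses `u t` as the integral of the even
function `2 G(2πξ) cos(2πξt)` over `ℝ`, which folds back onto `(0,∞)` and, after the substitution
`ω = 2πξ`, becomes `(2/π) ∫₀^∞ G(ω) cos(ωt) dω`. -/

open MeasureTheory Real Set FourierTransform ComplexConjugate

noncomputable def cosineTransform (u : ℝ → ℝ) (ω : ℝ) : ℝ :=
  ∫ x in Ioi 0, u x * cos (ω * x)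

lemma cosineTransform_neg (u : ℝ → ℝ) (ω : ℝ) : cosineTransform u (-ω) = cosineTransform u ω := by
  simp only [cosineTransform, neg_mul, cos_neg]

lemma cos_mul_abs (c x : ℝ) : cos (c * |x|) = cos (c * x) := by
  rcases abs_choice x with h | h <;> simp [h]

lemma MeasureTheory.IntegrableOn.integrable_comp_abs {u : ℝ → ℝ} (hu : IntegrableOn u (Ioi 0)) :
    Integrable (fun x => u |x|) := by
  have hIoi : IntegrableOn (fun x => u |x|) (Ioi 0) :=
    hu.congr_fun (fun x hx => by rw [abs_of_pos hx]) measurableSet_Ioi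
  have hIic : IntegrableOn (fun x => u |x|) (Iic 0) := by
    have hneg : MeasurableEmbedding fun x : ℝ => -x := (Homeomorph.neg ℝ).measurableEmbedding
    rw [← Measure.map_neg_eq_self (volume : Measure ℝ), hneg.integrableOn_map_iff]
    simp_rw [Function.comp_def, abs_neg, neg_preimage, neg_Iic, neg_zero]
    exact Iff.mpr integrableOn_Ici_iff_integrableOn_Ioi hIoi
  simpa using hIic.union hIoi

lemma integral_exp_mul_I_smul_comp_abs {u : ℝ → ℝ} (hu : IntegrableOn u (Ioi 0)) (c : ℝ) :
    ∫ x, Complex.exp (↑(c * x) * Complex.I) • (u |x| : ℂ) = ↑(2 * cosineTransform u c) := by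
  set I := ∫ x, Complex.exp (↑(c * x) * Complex.I) • (u |x| : ℂ)
  -- conjugating the integrand amounts to the substitution `x ↦ -x`
  have hconj : conj I = I := by
    rw [← integral_conj, ← integral_neg_eq_self]
    congr 1; ext x
    simp [← Complex.exp_conj, abs_neg]
  have hre : I.re = 2 * cosineTransform u c := by
    have hint : Integrable (fun x => Complex.exp (↑(c * x) * Complex.I) • (u |x| : ℂ)) :=
      hu.integrable_comp_abs.ofReal.bdd_mul (by fun_prop) (c := 1)
        (.of_forall fun x => (Complex.norm_exp_ofReal_mul_I _).le)
    rw [← RCLike.re_to_complex, ← integral_re hint, cosineTransform, ← integral_comp_abs]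
    congr 1; ext x
    rw [smul_eq_mul, RCLike.re_to_complex, Complex.re_mul_ofReal, Complex.exp_ofReal_mul_I_re,
      cos_mul_abs, mul_comm]
  rw [← Complex.conj_eq_iff_re.mp hconj, hre]

lemma fourier_ofReal_comp_abs {u : ℝ → ℝ} (hu : IntegrableOn u (Ioi 0)) (ξ : ℝ) :
    𝓕 (fun x => (u |x| : ℂ)) ξ = ↑(2 * cosineTransform u (2 * π * ξ)) := by
  simp_rw [Real.fourier_real_eq_integral_exp_smul, show ∀ x, -2 * π * x * ξ = -(2 * π * ξ) * x by
    intro x; ring]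
  rw [integral_exp_mul_I_smul_comp_abs hu, cosineTransform_neg]

theorem cosineTransform_inversion {u : ℝ → ℝ} (hu : ContinuousOn u (Ici 0))
    (hui : IntegrableOn u (Ioi 0)) (hC : IntegrableOn (cosineTransform u) (Ioi 0)) (t : ℝ) :
    u |t| = 2 / π * ∫ ω in Ioi 0, cosineTransform u ω * cos (ω * t) := by
  set v : ℝ → ℝ := fun y => 2 * cosineTransform u (2 * π * y)
  have hv : IntegrableOn v (Ioi 0) := by
    refine Integrable.const_mul (?_ : IntegrableOn (fun y => cosineTransform u (2 * π * y)) _) 2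
    rw [integrableOn_Ioi_comp_mul_left_iff (cosineTransform u) 0 (by positivity), mul_zero]
    exact hC
  have hFu : 𝓕 (fun x => (u |x| : ℂ)) = fun ξ => (v |ξ| : ℂ) := by
    ext ξ
    rcases abs_choice ξ with h | h <;>
      simp only [fourier_ofReal_comp_abs hui, v, h, mul_neg, cosineTransform_neg]
  have hcont : Continuous fun x => (u |x| : ℂ) :=
    Complex.continuous_ofReal.comp (hu.comp_continuous continuous_abs abs_nonneg)
  have hinv := hui.integrable_comp_abs.ofReal.fourierInv_fourier_eq
    (hFu ▸ hv.integrable_comp_abs.ofReal) hcont.continuousAt (v := t)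
  rw [hFu, Real.fourierInv_eq_fourier_neg, fourier_ofReal_comp_abs hv, Complex.ofReal_inj] at hinv
  have hscale : cosineTransform v (2 * π * -t)
      = (2 * π)⁻¹ * ∫ ω in Ioi 0, 2 * (cosineTransform u ω * cos (ω * t)) := by
    calc cosineTransform v (2 * π * -t)
        = ∫ y in Ioi 0, 2 * (cosineTransform u (2 * π * y) * cos (2 * π * y * t)) := by
          simp only [cosineTransform, v]
          congr 1; ext y
          rw [show 2 * π * -t * y = -(2 * π * y * t) by ring, cos_neg, mul_assoc]
      _ = _ := by
          rw [integral_comp_mul_left_Ioi (fun ω => 2 * (cosineTransform u ω * cos (ω * t))) 0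
            (by positivity), mul_zero, smul_eq_mul]
  rw [← hinv, hscale, integral_const_mul]
  ring

/-- Laplace inversion via the cosine representation: if `f` is continuous on `[0,∞)`,
`t ↦ e^{−σt} f(t)` is integrable on `(0,∞)`, and
`G(ω) = ∫₀^∞ e^{−σt'} f(t') cos(ωt') dt' = Re(ℒf)(σ+iω)` is integrable on `(0,∞)`,
then for every `t > 0`, `f(t) = (2 e^{σt}/π) ∫₀^∞ G(ω) cos(ωt) dω`. -/
theorem stmt11 (σ : ℝ) (f : ℝ → ℝ) (hf : ContinuousOn f (Ici 0))
    (hint : IntegrableOn (fun t => Real.exp (-σ * t) * f t) (Ioi 0))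
    (G : ℝ → ℝ)
    (hG : ∀ ω, G ω = ∫ t' in Ioi (0:ℝ), Real.exp (-σ * t') * f t' * Real.cos (ω * t'))
    (hGint : IntegrableOn G (Ioi 0))
    (t : ℝ) (ht : 0 < t) :
    f t = (2 * Real.exp (σ * t) / π) * ∫ ω in Ioi (0:ℝ), G ω * Real.cos (ω * t) := by
  have hGu : G = cosineTransform fun t => Real.exp (-σ * t) * f t := funext hG
  subst hGu
  have hu : ContinuousOn (fun t => Real.exp (-σ * t) * f t) (Ici 0) := by fun_prop
  have hinv := cosineTransform_inversion hu hint hGint t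
  rw [abs_of_pos ht] at hinv
  calc f t = Real.exp (σ * t) * (Real.exp (-σ * t) * f t) := by
        rw [← mul_assoc, ← Real.exp_add, neg_mul, add_neg_cancel, Real.exp_zero, one_mul]
    _ = _ := by rw [hinv]; ring
end

section
/- Let S² denote the unit sphere in ℝ³ with its surface measure dσ, and let p : [−1,1] → ℝ be continuous with p(x) > 0 for all x ∈ [−1,1] and ∫_{S²} p(θ·θ') dσ(θ') = 1 for every unit vector θ. If f : S² → ℝ is continuous and satisfies f(θ) = ∫_{S²} p(θ·θ') f(θ') dσ(θ') for every θ ∈ S², then f is constant. (Equivalently: every continuous eigenfunction of the scattering operator K₀ with eigenvalue 1 is constant.) -/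
open MeasureTheory Real Set Metric
open scoped RealInnerProductSpace

/-! Maximum principle: at a maximum point `x` of `f`, the identity `f x = ∫ k x y * f y dy` with
`∫ k x y dy = 1` says that `∫ k x y * (f x - f y) dy = 0`. The integrand is nonnegative and `k > 0`,
so `f = f x` almost everywhere, hence everywhere since `f` is continuous and nonempty open sets
have positive measure. -/

theorem ae_eq_of_le_of_eq_integral_mul {X : Type*} [MeasurableSpace X] {μ : Measure X}
    {k f : X → ℝ} {c : ℝ} (hk_pos : ∀ᵐ x ∂μ, 0 < k x) (hk : ∫ x, k x ∂μ = 1)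
    (hkf : Integrable (fun x ↦ k x * f x) μ) (hf_le : ∀ᵐ x ∂μ, f x ≤ c)
    (hc : c = ∫ x, k x * f x ∂μ) : ∀ᵐ x ∂μ, f x = c := by
  -- a non-integrable `k` would have integral `0`, not `1`
  have hk_int : Integrable k μ := .of_integral_ne_zero (by rw [hk]; exact one_ne_zero)
  have hgap_int : Integrable (fun x ↦ k x * c - k x * f x) μ := (hk_int.mul_const c).sub hkf
  have hgap_nonneg : 0 ≤ᵐ[μ] fun x ↦ k x * c - k x * f x := by
    filter_upwards [hk_pos, hf_le] with x hkx hfx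
    rw [Pi.zero_apply, ← mul_sub]
    exact mul_nonneg hkx.le (sub_nonneg.2 hfx)
  have hgap_zero : ∫ x, k x * c - k x * f x ∂μ = 0 := by
    rw [integral_sub (hk_int.mul_const c) hkf, integral_mul_const, hk, ← hc, one_mul, sub_self]
  filter_upwards [(integral_eq_zero_iff_of_nonneg_ae hgap_nonneg hgap_int).1 hgap_zero, hk_pos]
    with x hx hkx
  have : k x * (c - f x) = 0 := by rw [mul_sub]; exact hx
  linarith [(mul_eq_zero.1 this).resolve_left hkx.ne']

theorem eq_of_forall_eq_integral_kernel_mul {X : Type*} [TopologicalSpace X] [CompactSpace X]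
    [MeasurableSpace X] [OpensMeasurableSpace X] {μ : Measure X} [IsFiniteMeasure μ]
    [μ.IsOpenPosMeasure] {k : X → X → ℝ} (hk_cont : ∀ x, Continuous (k x))
    (hk_pos : ∀ x y, 0 < k x y) (hk : ∀ x, ∫ y, k x y ∂μ = 1) {f : X → ℝ} (hf : Continuous f)
    (hfix : ∀ x, f x = ∫ y, k x y * f y ∂μ) (x₁ x₂ : X) : f x₁ = f x₂ := by
  obtain ⟨xmax, -, hxmax⟩ := isCompact_univ.exists_isMaxOn ⟨x₁, mem_univ _⟩ hf.continuousOn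
  have hae : f =ᵐ[μ] fun _ ↦ f xmax :=
    ae_eq_of_le_of_eq_integral_mul (.of_forall (hk_pos xmax)) (hk xmax)
      (((hk_cont xmax).mul hf).integrable_of_hasCompactSupport (.of_compactSpace _))
      (.of_forall fun y ↦ hxmax (mem_univ y)) (hfix xmax)
  have hconst := (hf.ae_eq_iff_eq μ continuous_const).1 hae
  exact (congrFun hconst x₁).trans (congrFun hconst x₂).symm

/-- If the scattering phase function `p` is continuous and strictly positive on
`[−1,1]` with `∫_{S²} p(θ·θ') dσ(θ') = 1` for every `θ`, then every continuous
eigenfunction of the scattering operator `K₀` with eigenvalue `1`, i.e. every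
continuous `f` with `f(θ) = ∫_{S²} p(θ·θ') f(θ') dσ(θ')` for all `θ`, is constant. -/
theorem stmt14 (p : ℝ → ℝ) (hp_cont : ContinuousOn p (Icc (-1) 1))
    (hp_pos : ∀ x ∈ Icc (-1 : ℝ) 1, 0 < p x)
    (hp_norm : ∀ θ : sphere (0 : EuclideanSpace ℝ (Fin 3)) 1,
      (∫ θ' : sphere (0 : EuclideanSpace ℝ (Fin 3)) 1,
          p ⟪(θ : EuclideanSpace ℝ (Fin 3)), (θ' : EuclideanSpace ℝ (Fin 3))⟫
          ∂(volume : Measure (EuclideanSpace ℝ (Fin 3))).toSphere) = 1)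
    (f : sphere (0 : EuclideanSpace ℝ (Fin 3)) 1 → ℝ) (hf : Continuous f)
    (hfix : ∀ θ : sphere (0 : EuclideanSpace ℝ (Fin 3)) 1,
      f θ = ∫ θ' : sphere (0 : EuclideanSpace ℝ (Fin 3)) 1,
        p ⟪(θ : EuclideanSpace ℝ (Fin 3)), (θ' : EuclideanSpace ℝ (Fin 3))⟫ * f θ'
        ∂(volume : Measure (EuclideanSpace ℝ (Fin 3))).toSphere) :
    ∀ θ₁ θ₂ : sphere (0 : EuclideanSpace ℝ (Fin 3)) 1, f θ₁ = f θ₂ := by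
  have hinner : ∀ θ θ' : sphere (0 : EuclideanSpace ℝ (Fin 3)) 1,
      ⟪(θ : EuclideanSpace ℝ (Fin 3)), (θ' : EuclideanSpace ℝ (Fin 3))⟫ ∈ Icc (-1 : ℝ) 1 :=
    fun θ θ' ↦ real_inner_mem_Icc_of_norm_eq_one (by simp) (by simp)
  refine eq_of_forall_eq_integral_kernel_mul (fun θ ↦ ?_) (fun θ θ' ↦ hp_pos _ (hinner θ θ'))
    hp_norm hf hfix
  exact hp_cont.comp_continuous (continuous_const.inner continuous_subtype_val) (hinner θ)
end

section
/- Fix N ∈ ℕ, reals 0 < μ₁ < ⋯ < μ_N < 1, positive weights w₁,…,w_N, a real σ_s > 0, and a complex number σ_t. For a complex ν with σ_t ν ≠ ±μ_i for all i, define φ(ν, ±μ_i) = (σ_s ν / 2) / (σ_t ν ∓ μ_i). Suppose ν and ν' are two nonzero complex numbers with ν ≠ ν', each with σ_t ν ≠ ±μ_i and σ_t ν' ≠ ±μ_i for all i, and each satisfying the characteristic equation Σ_{j=1}^N w_j [φ(·, μ_j) + φ(·, −μ_j)] = 1. Then the orthogonality relation holds: Σ_{i=1}^N w_i μ_i [φ(ν,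 μ_i) φ(ν', μ_i) − φ(ν, −μ_i) φ(ν', −μ_i)] = 0. -/
open Complex

/-! Partial fractions, `m / ((a - m) (b - m)) = (a / (a - m) - b / (b - m)) / (b - a)` with `a = σ_t ν`,
`b = σ_t ν'`, turn each term `μ_i [φ(ν, μ_i) φ(ν', μ_i) − φ(ν, −μ_i) φ(ν', −μ_i)]` into
`σ_s ν ν' / (2 (ν' − ν))` times the difference of the `i`-th terms of the two characteristic
equations (the factor `σ_t` cancels, so `σ_t = 0` is allowed). Summing against the weights gives
`σ_s ν ν' / (2 (ν' − ν)) · (1 − 1) = 0`. -/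

/-- The ADO eigenfunction: `φ(ν, m) = (σ_s ν / 2) / (σ_t ν − m)` for a signed
Gauss–Legendre node `m ∈ {±μ₁, …, ±μ_N}`. -/
noncomputable def adoPhi (σs : ℝ) (σt ν : ℂ) (m : ℝ) : ℂ :=
  (σs * ν / 2) / (σt * ν - m)

theorem mul_cross_sub_eq_mul_sub {K : Type*} [Field K] (s t x y m : K) (hxy : x ≠ y)
    (h₁ : t * x - m ≠ 0) (h₂ : t * x + m ≠ 0) (h₃ : t * y - m ≠ 0) (h₄ : t * y + m ≠ 0) :
    m * (s * x / (t * x - m) * (s * y / (t * y - m)) - s * x / (t * x + m) * (s * y / (t * y + m))) =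
      s * x * y / (y - x) *
        ((s * x / (t * x - m) + s * x / (t * x + m)) - (s * y / (t * y - m) + s * y / (t * y + m))) := by
  have hyx : y - x ≠ 0 := sub_ne_zero.mpr hxy.symm
  rw [div_add_div _ _ h₁ h₂, div_add_div _ _ h₃ h₄, div_mul_div_comm, div_mul_div_comm,
    div_sub_div _ _ (mul_ne_zero h₁ h₃) (mul_ne_zero h₂ h₄),
    div_sub_div _ _ (mul_ne_zero h₁ h₂) (mul_ne_zero h₃ h₄), mul_div_assoc', div_mul_div_comm,
    div_eq_div_iff (by simp [*]) (by simp [*])]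
  ring

theorem adoPhi_eq (σs : ℝ) (σt ν : ℂ) (m : ℝ) :
    adoPhi σs σt ν m = (σs / 2 : ℂ) * ν / (σt * ν - m) := by
  rw [adoPhi, div_mul_eq_mul_div₀]

theorem node_mul_adoPhi_cross_eq (σs : ℝ) (σt ν ν' : ℂ) (m : ℝ) (hne : ν ≠ ν')
    (h₁ : σt * ν ≠ m) (h₂ : σt * ν ≠ -m) (h₃ : σt * ν' ≠ m) (h₄ : σt * ν' ≠ -m) :
    m * (adoPhi σs σt ν m * adoPhi σs σt ν' m - adoPhi σs σt ν (-m) * adoPhi σs σt ν' (-m)) =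
      (σs / 2 : ℂ) * ν * ν' / (ν' - ν) *
        ((adoPhi σs σt ν m + adoPhi σs σt ν (-m)) - (adoPhi σs σt ν' m + adoPhi σs σt ν' (-m))) := by
  simp only [adoPhi_eq, ofReal_neg, sub_neg_eq_add]
  exact mul_cross_sub_eq_mul_sub _ _ _ _ _ hne (sub_ne_zero.mpr h₁)
    (by rwa [← sub_neg_eq_add, sub_ne_zero]) (sub_ne_zero.mpr h₃)
    (by rwa [← sub_neg_eq_add, sub_ne_zero])

theorem stmt16_general (N : ℕ) (μ w : Fin N → ℝ)
    (σs : ℝ) (σt : ℂ)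
    (ν ν' : ℂ) (hne : ν ≠ ν')
    (hres : ∀ i, σt * ν ≠ (μ i : ℂ) ∧ σt * ν ≠ -(μ i : ℂ))
    (hres' : ∀ i, σt * ν' ≠ (μ i : ℂ) ∧ σt * ν' ≠ -(μ i : ℂ))
    (hchar : ∑ j, (w j : ℂ) * (adoPhi σs σt ν (μ j) + adoPhi σs σt ν (-(μ j))) = 1)
    (hchar' : ∑ j, (w j : ℂ) * (adoPhi σs σt ν' (μ j) + adoPhi σs σt ν' (-(μ j))) = 1) :
    ∑ i, (w i : ℂ) * (μ i : ℂ) *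
        (adoPhi σs σt ν (μ i) * adoPhi σs σt ν' (μ i) -
          adoPhi σs σt ν (-(μ i)) * adoPhi σs σt ν' (-(μ i))) = 0 := by
  set c : ℂ := (σs / 2 : ℂ) * ν * ν' / (ν' - ν)
  have hterm : ∀ i, (w i : ℂ) * (μ i : ℂ) *
        (adoPhi σs σt ν (μ i) * adoPhi σs σt ν' (μ i) -
          adoPhi σs σt ν (-(μ i)) * adoPhi σs σt ν' (-(μ i))) =
      c * ((w i : ℂ) * (adoPhi σs σt ν (μ i) + adoPhi σs σt ν (-(μ i))) -
        (w i : ℂ) * (adoPhi σs σt ν' (μ i) + adoPhi σs σt ν' (-(μ i)))) := fun i => by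
    rw [mul_assoc, node_mul_adoPhi_cross_eq σs σt ν ν' (μ i) hne (hres i).1 (hres i).2
      (hres' i).1 (hres' i).2]
    ring
  rw [Finset.sum_congr rfl fun i _ => hterm i, ← Finset.mul_sum, Finset.sum_sub_distrib,
    hchar, hchar', sub_self, mul_zero]

/-- ADO orthogonality: if the two distinct nonzero separation constants `ν ≠ ν'`
both satisfy the characteristic equation `Σ_j w_j [φ(·, μ_j) + φ(·, −μ_j)] = 1`,
then `Σ_i w_i μ_i [φ(ν, μ_i) φ(ν', μ_i) − φ(ν, −μ_i) φ(ν', −μ_i)] = 0`. -/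
theorem stmt16 (N : ℕ) (μ w : Fin N → ℝ)
    (hμ0 : ∀ i, 0 < μ i) (hμ1 : ∀ i, μ i < 1) (hμmono : StrictMono μ)
    (hw : ∀ i, 0 < w i)
    (σs : ℝ) (hσs : 0 < σs) (σt : ℂ)
    (ν ν' : ℂ) (hν : ν ≠ 0) (hν' : ν' ≠ 0) (hne : ν ≠ ν')
    (hres : ∀ i, σt * ν ≠ (μ i : ℂ) ∧ σt * ν ≠ -(μ i : ℂ))
    (hres' : ∀ i, σt * ν' ≠ (μ i : ℂ) ∧ σt * ν' ≠ -(μ i : ℂ))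
    (hchar : ∑ j, (w j : ℂ) * (adoPhi σs σt ν (μ j) + adoPhi σs σt ν (-(μ j))) = 1)
    (hchar' : ∑ j, (w j : ℂ) * (adoPhi σs σt ν' (μ j) + adoPhi σs σt ν' (-(μ j))) = 1) :
    ∑ i, (w i : ℂ) * (μ i : ℂ) *
        (adoPhi σs σt ν (μ i) * adoPhi σs σt ν' (μ i) -
          adoPhi σs σt ν (-(μ i)) * adoPhi σs σt ν' (-(μ i))) = 0 :=
  stmt16_general N μ w σs σt ν ν' hne hres hres' hchar hchar'
end
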